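/- Every periodic point of a contracting polygonal billiard of period n > 2 is hyperbolic: if (s₀, θ₀) is periodic of period n > 2, then at least two of the collision angles θ̄_i are nonzero, hence α_n(s₀,θ₀) = ∏_{i=1}^{n} ρ(θ̄_i) > 1, and the orbit is uniformly hyperbolic with eigenvalues α_n > 1 and |β_n| ≤ λⁿ < 1 for DΦⁿ. -/

import Mathlib

open Real Finset

/-- Rotation by `π/2`: the inward unit normal to a side with unit tangent `u`. -/
def sideNormal (u : ℝ × ℝ) : ℝ × ℝ := (-u.2, u.1)

/-- An orbit of a polygonal billiard with reflection law `f`, recorded through its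
collision points `q i`, the unit tangent `u i` of the side at the `i`-th collision,
the post-collision unit velocity `v i`, the outgoing angle `θ i` and the incidence
angle `θbar i` of the `i`-th collision (for `i ≥ 1`). -/
structure BilliardOrbit (f : ℝ → ℝ) : Type where
  q : ℕ → ℝ × ℝ
  u : ℕ → ℝ × ℝ
  v : ℕ → ℝ × ℝ
  θ : ℕ → ℝ
  θbar : ℕ → ℝ
  hu : ∀ i, (u i).1 ^ 2 + (u i).2 ^ 2 = 1
  hθ : ∀ i, θ i ∈ Set.Ioo (-(π / 2)) (π / 2)
  hθbar : ∀ i, θbar i ∈ Set.Ioo (-(π / 2)) (π / 2)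
  hrefl : ∀ i, θ i = f (θbar i)
  hflight : ∀ i, ∃ t : ℝ, 0 < t ∧ q (i + 1) = q i + t • v i
  hv : ∀ i, v i = Real.sin (θ i) • u i + Real.cos (θ i) • sideNormal (u i)
  hincid : ∀ i,
    -(v i) + (2 * ((u (i + 1)).1 * (v i).1 + (u (i + 1)).2 * (v i).2)) • u (i + 1) =
      Real.sin (θbar (i + 1)) • u (i + 1) + Real.cos (θbar (i + 1)) • sideNormal (u (i + 1))
  hback : ∀ i, v (i + 1) = -(v i) → q (i + 2) = q i

/-! A collision with zero incidence angle sends the ball straight back along its incoming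
segment. If at most one of the `n` incidence angles over a period were nonzero, there would be
`n - 1` consecutive such reversals. For `n` odd, they fold the orbit onto a single segment
and force two consecutive collision points to coincide; for `n` even, the velocity comes back
reversed after the `n - 1` reversals, so by periodicity every collision is a reversal and the
orbit has period `2 < n`. With two nonzero angles, `ρ(θ̄) = cos (f θ̄) / cos θ̄ > 1` at both of
them and `ρ ≥ 1` everywhere, because a contracting law shrinks `|θ̄|` and cosine decreases on
`[0, π]`. -/

open Function

lemma one_le_cos_div_cos {a b : ℝ} (hb : |b| < π / 2) (hab : |a| ≤ |b|) :
    1 ≤ cos a / cos b := by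
  rw [one_le_div (cos_pos_of_mem_Ioo (abs_lt.mp hb)), ← cos_abs a, ← cos_abs b]
  exact cos_le_cos_of_nonneg_of_le_pi (abs_nonneg a) (by linarith [pi_pos]) hab

lemma one_lt_cos_div_cos {a b : ℝ} (hb : |b| < π / 2) (hab : |a| < |b|) :
    1 < cos a / cos b := by
  rw [one_lt_div (cos_pos_of_mem_Ioo (abs_lt.mp hb)), ← cos_abs a, ← cos_abs b]
  exact cos_lt_cos_of_nonneg_of_le_pi (abs_nonneg a) (by linarith [pi_pos]) hab

lemma one_lt_prod_cos_div_cos {ι : Type*} {s : Finset ι} {a b : ι → ℝ}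
    (hb : ∀ i ∈ s, |b i| < π / 2) (hab : ∀ i ∈ s, |a i| ≤ |b i|) (hlt : ∃ i ∈ s, |a i| < |b i|) :
    1 < ∏ i ∈ s, cos (a i) / cos (b i) := by
  obtain ⟨i, hi, hlti⟩ := hlt
  calc (1 : ℝ) = ∏ _i ∈ s, 1 := prod_const_one.symm
    _ < _ := prod_lt_prod (fun _ _ ↦ one_pos) (fun j hj ↦ one_le_cos_div_cos (hb j hj) (hab j hj))
      ⟨i, hi, one_lt_cos_div_cos (hb i hi) hlti⟩

namespace Function.Periodic

variable {α : Type*} {g : ℕ → α} {n : ℕ}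

lemma forall_of_forall_window (hg : Periodic g n) (hn : 0 < n) {p : α → Prop} {k : ℕ}
    (h : ∀ j < n, p (g (k + j))) (i : ℕ) : p (g i) := by
  have hshift : Periodic (fun x ↦ g (k + x)) n := fun x ↦ by simp only [← add_assoc, hg _]
  have hi : g i = g (k + (i + k * n - k) % n) := by
    have hk : k ≤ i + k * n := le_add_left (Nat.le_mul_of_pos_right k hn)
    rw [hshift.map_mod_nat, Nat.add_sub_cancel' hk, ← smul_eq_mul, hg.nsmul]
  exact hi ▸ h _ (Nat.mod_lt _ hn)

lemma exists_window_eq_zero [Zero α] (hg : Periodic g n)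
    (h : ∀ i ∈ Icc 1 n, ∀ j ∈ Icc 1 n, g i ≠ 0 → g j ≠ 0 → i = j) :
    ∃ k, ∀ t, 0 < t → t < n → g (k + t) = 0 := by
  by_cases hk : ∃ k ∈ Icc 1 n, g k ≠ 0
  · obtain ⟨k, hk, hk0⟩ := hk
    have ⟨hk1, hkn⟩ := mem_Icc.mp hk
    refine ⟨k, fun t ht0 htn ↦ by_contra fun hkt ↦ ?_⟩
    rcases le_or_gt (k + t) n with hle | hgt
    · have := h k hk _ (mem_Icc.mpr ⟨by omega, hle⟩) hk0 hkt
      omega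
    · rw [show k + t = (k + t - n) + n by omega, hg] at hkt
      have := h k hk _ (mem_Icc.mpr ⟨by omega, by omega⟩) hk0 hkt
      omega
  · push Not at hk
    exact ⟨0, fun t ht0 htn ↦ by simpa using hk t (mem_Icc.mpr ⟨ht0, htn.le⟩)⟩

end Function.Periodic

namespace BilliardOrbit

variable {f : ℝ → ℝ} (O : BilliardOrbit f)

lemma v_fst_sq_add_v_snd_sq (i : ℕ) : (O.v i).1 ^ 2 + (O.v i).2 ^ 2 = 1 := by
  have h1 := congrArg Prod.fst (O.hv i)
  have h2 := congrArg Prod.snd (O.hv i)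
  simp only [Prod.fst_add, Prod.snd_add, Prod.smul_fst, Prod.smul_snd, smul_eq_mul,
    sideNormal] at h1 h2
  rw [h1, h2]
  linear_combination (sin (O.θ i) ^ 2 + cos (O.θ i) ^ 2) * O.hu i + sin_sq_add_cos_sq (O.θ i)

lemma q_succ_ne (i : ℕ) : O.q (i + 1) ≠ O.q i := by
  intro hq
  obtain ⟨t, ht, hflight⟩ := O.hflight i
  have hv : O.v i = 0 := by
    rw [hq, left_eq_add, smul_eq_zero] at hflight
    exact hflight.resolve_left ht.ne'
  simpa [hv] using O.v_fst_sq_add_v_snd_sq i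

lemma v_succ_eq_neg_of_θbar_eq_zero (hf0 : f 0 = 0) {i : ℕ} (hz : O.θbar (i + 1) = 0) :
    O.v (i + 1) = -O.v i := by
  have hE := O.hincid i
  rw [hz, sin_zero, cos_zero, zero_smul, one_smul, zero_add] at hE
  -- the tangential component of the incidence equation says that `v i` is normal to the side
  have horth : (O.u (i + 1)).1 * (O.v i).1 + (O.u (i + 1)).2 * (O.v i).2 = 0 := by
    have h1 := congrArg Prod.fst hE
    have h2 := congrArg Prod.snd hE
    simp only [Prod.fst_add, Prod.snd_add, Prod.smul_fst, Prod.smul_snd, Prod.fst_neg,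
      Prod.snd_neg, smul_eq_mul, sideNormal] at h1 h2
    linear_combination (O.u (i + 1)).1 * h1 + (O.u (i + 1)).2 * h2 -
      (2 * ((O.u (i + 1)).1 * (O.v i).1 + (O.u (i + 1)).2 * (O.v i).2)) * O.hu (i + 1)
  rw [horth, mul_zero, zero_smul, add_zero] at hE
  rw [O.hv (i + 1), O.hrefl, hz, hf0, sin_zero, cos_zero, zero_smul, one_smul, zero_add, ← hE]

lemma q_add_two_mul_eq_and_v_add_two_mul_eq {k m : ℕ}
    (hrev : ∀ j < 2 * m, O.v (k + j + 1) = -O.v (k + j)) :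
    O.q (k + 2 * m) = O.q k ∧ O.v (k + 2 * m) = O.v k := by
  induction m with
  | zero => simp
  | succ m ih =>
    obtain ⟨hq, hv⟩ := ih fun j hj ↦ hrev j (by omega)
    have h1 := hrev (2 * m) (by omega)
    have h2 := hrev (2 * m + 1) (by omega)
    rw [show k + (2 * m + 1) = k + 2 * m + 1 by omega] at h2
    refine ⟨?_, ?_⟩
    · rw [show k + 2 * (m + 1) = k + 2 * m + 2 by omega, O.hback _ h1, hq]
    · rw [show k + 2 * (m + 1) = k + 2 * m + 1 + 1 by omega, h2, h1, neg_neg, hv]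

lemma not_forall_θbar_add_eq_zero (hf0 : f 0 = 0) {n : ℕ} (hn : 2 < n)
    (hq : Periodic O.q n) (hv : Periodic O.v n)
    (hmin : ∃ i, O.q (i + 2) ≠ O.q i ∨ O.v (i + 2) ≠ O.v i) (k : ℕ) :
    ¬ ∀ t, 0 < t → t < n → O.θbar (k + t) = 0 := by
  intro hk
  have hrev : ∀ j, j + 1 < n → O.v (k + j + 1) = -O.v (k + j) := fun j hj ↦
    O.v_succ_eq_neg_of_θbar_eq_zero hf0 (hk (j + 1) (by omega) hj)
  obtain ⟨m, rfl | rfl⟩ := Nat.even_or_odd' n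
  · obtain ⟨m, rfl⟩ : ∃ m', m = m' + 1 := ⟨m - 1, by omega⟩
    have hvk := (O.q_add_two_mul_eq_and_v_add_two_mul_eq (m := m) fun j hj ↦ hrev j (by omega)).2
    have hlast : O.v (k + (2 * m + 1) + 1) = -O.v (k + (2 * m + 1)) := by
      rw [show k + (2 * m + 1) + 1 = k + 2 * (m + 1) by omega, hv k, ← add_assoc,
        hrev (2 * m) (by omega), hvk, neg_neg]
    have hpair : Periodic (fun i ↦ (O.v i, O.v (i + 1))) (2 * (m + 1)) := fun i ↦ by
      simp only [add_right_comm i _ 1, hv _]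
    have hrev_all (i : ℕ) : O.v (i + 1) = -O.v i :=
      hpair.forall_of_forall_window (by omega) (p := fun x ↦ x.2 = -x.1) (fun j hj ↦
        if hj' : j + 1 < 2 * (m + 1) then hrev j hj' else by
          obtain rfl : j = 2 * m + 1 := by omega
          exact hlast) i
    obtain ⟨i, hi⟩ := hmin
    have h2 := O.q_add_two_mul_eq_and_v_add_two_mul_eq (k := i) (m := 1) fun j _ ↦ hrev_all (i + j)
    exact hi.elim (· h2.1) (· h2.2)
  · have hqk := (O.q_add_two_mul_eq_and_v_add_two_mul_eq (m := m) fun j hj ↦ hrev j (by omega)).1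
    exact O.q_succ_ne (k + 2 * m) (by rw [add_assoc, hq k, hqk])

end BilliardOrbit

theorem period_n_hyperbolic_general (f f' : ℝ → ℝ) (lam : ℝ) (n : ℕ)
    (hn : 2 < n) (hlam0 : 0 ≤ lam) (hlam1 : lam < 1) (hf0 : f 0 = 0)
    (hfc : ∀ x : ℝ, |x| < π / 2 → |f x| ≤ lam * |x|)
    (hfd' : ∀ x : ℝ, |x| < π / 2 → |f' x| ≤ lam)
    (O : BilliardOrbit f)
    (hper : ∀ i, O.q (i + n) = O.q i ∧ O.v (i + n) = O.v i ∧ O.u (i + n) = O.u i ∧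
      O.θ (i + n) = O.θ i ∧ O.θbar (i + n) = O.θbar i)
    (hmin : ∀ m : ℕ, 0 < m → m < n → ∃ i, O.q (i + m) ≠ O.q i ∨ O.v (i + m) ≠ O.v i) :
    (∃ i ∈ Finset.Icc 1 n, ∃ j ∈ Finset.Icc 1 n, i ≠ j ∧ O.θbar i ≠ 0 ∧ O.θbar j ≠ 0) ∧
    (Real.cos (O.θ 0) / Real.cos (O.θbar n)) *
        ∏ i ∈ Finset.Ico 1 n, Real.cos (O.θ i) / Real.cos (O.θbar i) =
      ∏ i ∈ Finset.Icc 1 n, Real.cos (f (O.θbar i)) / Real.cos (O.θbar i) ∧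
    1 < ∏ i ∈ Finset.Icc 1 n, Real.cos (f (O.θbar i)) / Real.cos (O.θbar i) ∧
    |∏ i ∈ Finset.Icc 1 n, f' (O.θbar i)| ≤ lam ^ n ∧ lam ^ n < 1 := by
  have hθbar (i : ℕ) : |O.θbar i| < π / 2 := abs_lt.mpr (O.hθbar i)
  have htwo : ∃ i ∈ Icc 1 n, ∃ j ∈ Icc 1 n, i ≠ j ∧ O.θbar i ≠ 0 ∧ O.θbar j ≠ 0 := by
    by_contra h
    obtain ⟨k, hk⟩ := Periodic.exists_window_eq_zero (g := O.θbar) (fun i ↦ (hper i).2.2.2.2)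
      fun i hi j hj hi0 hj0 ↦ by_contra fun hij ↦ h ⟨i, hi, j, hj, hij, hi0, hj0⟩
    exact O.not_forall_θbar_add_eq_zero hf0 hn (fun i ↦ (hper i).1) (fun i ↦ (hper i).2.1)
      (hmin 2 two_pos hn) k hk
  refine ⟨htwo, ?_, ?_, ?_, pow_lt_one₀ hlam0 hlam1 (by omega)⟩
  · have hθbar_n : O.θbar n = O.θbar 0 := by simpa using (hper 0).2.2.2.2
    rw [← Ico_add_one_right_eq_Icc, prod_Ico_succ_top (by omega), mul_comm]
    simp only [O.hrefl, hθbar_n]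
  · obtain ⟨i, hi, -, -, -, hi0, -⟩ := htwo
    exact one_lt_prod_cos_div_cos (fun j _ ↦ hθbar j)
      (fun j _ ↦ (hfc _ (hθbar j)).trans (mul_le_of_le_one_left (abs_nonneg _) hlam1.le))
      ⟨i, hi, (hfc _ (hθbar i)).trans_lt (mul_lt_of_lt_one_left (abs_pos.mpr hi0) hlam1)⟩
  · rw [abs_prod]
    calc ∏ i ∈ Icc 1 n, |f' (O.θbar i)| ≤ ∏ _i ∈ Icc 1 n, lam :=
          prod_le_prod (fun _ _ ↦ abs_nonneg _) fun i _ ↦ hfd' _ (hθbar i)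
      _ = lam ^ n := by simp

/-- Periodic orbits of period `n > 2` of a contracting polygonal billiard are
hyperbolic: at least two of the incidence angles `θ̄ᵢ` are nonzero, hence the
expansion factor `αₙ` equals `∏ᵢ ρ(θ̄ᵢ) > 1` where `ρ(θ) = cos (f θ) / cos θ`, while
`|βₙ| = |∏ᵢ f'(θ̄ᵢ)| ≤ λⁿ < 1`. -/
theorem period_n_hyperbolic (f f' : ℝ → ℝ) (lam : ℝ) (n : ℕ)
    (hn : 2 < n) (hlam0 : 0 ≤ lam) (hlam1 : lam < 1) (hf0 : f 0 = 0)
    (hfc : ∀ x : ℝ, |x| < π / 2 → |f x| ≤ lam * |x|)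
    (hfd : ∀ x : ℝ, |x| < π / 2 → HasDerivAt f (f' x) x)
    (hfd' : ∀ x : ℝ, |x| < π / 2 → |f' x| ≤ lam)
    (O : BilliardOrbit f)
    (hper : ∀ i, O.q (i + n) = O.q i ∧ O.v (i + n) = O.v i ∧ O.u (i + n) = O.u i ∧
      O.θ (i + n) = O.θ i ∧ O.θbar (i + n) = O.θbar i)
    (hmin : ∀ m : ℕ, 0 < m → m < n → ∃ i, O.q (i + m) ≠ O.q i ∨ O.v (i + m) ≠ O.v i) :
    (∃ i ∈ Finset.Icc 1 n, ∃ j ∈ Finset.Icc 1 n, i ≠ j ∧ O.θbar i ≠ 0 ∧ O.θbar j ≠ 0) ∧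
    (Real.cos (O.θ 0) / Real.cos (O.θbar n)) *
        ∏ i ∈ Finset.Ico 1 n, Real.cos (O.θ i) / Real.cos (O.θbar i) =
      ∏ i ∈ Finset.Icc 1 n, Real.cos (f (O.θbar i)) / Real.cos (O.θbar i) ∧
    1 < ∏ i ∈ Finset.Icc 1 n, Real.cos (f (O.θbar i)) / Real.cos (O.θbar i) ∧
    |∏ i ∈ Finset.Icc 1 n, f' (O.θbar i)| ≤ lam ^ n ∧ lam ^ n < 1 :=
  period_n_hyperbolic_general f f' lam n hn hlam0 hlam1 hf0 hfc hfd' O hper hmin
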